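/- Glue allocation for signal tile types: let 𝒯 be a directed RTAS of width w and height h that uniquely self-assembles a pattern P with coloring function f, and let c₁, c₀, c_e be colors with c₁ ≠ c₀ such that T contains exactly one tile type t₁ of color c₁, exactly one tile type t₀ of color c₀, and exactly one tile type t_e of color c_e. Suppose there exist positions (x₁, y₁), (x₂, y₂) with 1 ≤ xᵢ ≤ w and 2 ≤ yᵢ ≤ h such that P(x₁, y₁) = c₁, P(x₂, y₂) = c₀, and P(x₁, y₁−1) = P(x₂, y₂−1) = c_e. Then t₁(S) = t₀(S) = t_e(N) and t₁(W) ≠ t₀(W). If moreover there is a position (x₃, y₃) with 2 ≤ x₃ ≤ w, 1 ≤ y₃ ≤ h, P(x₃, y₃) = c₁ and P(x₃−1, y₃) = c₀, then t₀(E) = t₁(W); and if there is a position (x₄, y₄) with 2 ≤ x₄ ≤ w, 1 ≤ y₄ ≤ h, P(x₄, y₄) = c₀ and P(x₄−1, y₄) = c₁, then t₁(E) = t₀(W). -/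
import Mathlib


/-- A tile type: a quadruple of glue labels (strings). -/
structure TileType where
  north : String
  west : String
  south : String
  east : String
deriving DecidableEq

/-- An assembly: a partial function from ℤ² to tile types. -/
abbrev Assembly := ℤ × ℤ → Option TileType

/-- A rectilinear tile assembly system (RTAS) of width `w ≥ 1` and height `h ≥ 1`:
a finite set `T` of tile types, together with an L-shaped seed assembly `σ` whose
domain is `{(x,0) : 0 ≤ x ≤ w} ∪ {(0,y) : 0 ≤ y ≤ h}` and which uses tile types
not in `T`. (All glues have strength 1 and the temperature is 2; this is encoded
in the attachment rule below.) -/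
structure RTAS where
  w : ℕ
  h : ℕ
  hw : 1 ≤ w
  hh : 1 ≤ h
  T : Finset TileType
  σ : Assembly
  seed_dom : ∀ p : ℤ × ℤ, (σ p).isSome ↔
      (0 ≤ p.1 ∧ p.1 ≤ (w : ℤ) ∧ p.2 = 0) ∨ (p.1 = 0 ∧ 0 ≤ p.2 ∧ p.2 ≤ (h : ℤ))
  seed_not_in_T : ∀ p t, σ p = some t → t ∉ T

namespace RTAS

/-- A tile of type `t ∈ T` may attach to assembly `α` at position `p ∉ dom α`:
both the west neighbor and the south neighbor lie in `dom α`, the east glue of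
the west neighbor equals `t.west`, and the north glue of the south neighbor
equals `t.south` (cooperation of two strength-1 glues at temperature 2). -/
def Attaches (S : RTAS) (α : Assembly) (p : ℤ × ℤ) (t : TileType) : Prop :=
  t ∈ S.T ∧ α p = none ∧
    ∃ tw ts : TileType,
      α (p.1 - 1, p.2) = some tw ∧ α (p.1, p.2 - 1) = some ts ∧
      tw.east = t.west ∧ ts.north = t.south

/-- One-step growth: `β` is obtained from `α` by a single tile attachment. -/
def Step (S : RTAS) (α β : Assembly) : Prop :=
  ∃ p t, S.Attaches α p t ∧ β = Function.update α p (some t)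

/-- An assembly is producible if it is obtained from the seed `σ` by a finite
sequence of single-tile attachments. -/
def Producible (S : RTAS) (α : Assembly) : Prop :=
  Relation.ReflTransGen S.Step S.σ α

/-- A producible assembly is terminal if no tile can attach to it. -/
def Terminal (S : RTAS) (α : Assembly) : Prop :=
  S.Producible α ∧ ∀ p t, ¬ S.Attaches α p t

/-- The RTAS is directed if any two producible assemblies have a common
producible extension. -/
def IsDirected (S : RTAS) : Prop :=
  ∀ α β, S.Producible α → S.Producible β →
    ∃ γ, Relation.ReflTransGen S.Step α γ ∧ Relation.ReflTransGen S.Step β γ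

/-- Every tile type of `T` appears in some producible assembly. -/
def UsesAllTiles (S : RTAS) : Prop :=
  ∀ t ∈ S.T, ∃ (α : Assembly) (p : ℤ × ℤ), S.Producible α ∧ α p = some t

/-- The domain `{0,…,w} × {0,…,h}` of a pattern of width `w` and height `h`. -/
def PatternDom (w h : ℕ) : Set (ℤ × ℤ) :=
  {p | 0 ≤ p.1 ∧ p.1 ≤ (w : ℤ) ∧ 0 ≤ p.2 ∧ p.2 ≤ (h : ℤ)}

/-- `S` uniquely self-assembles the pattern `P` (of width `S.w` and height `S.h`)
with coloring function `f`: every terminal producible assembly `α` has domain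
`dom P` and satisfies `f (α p) = P p` on it. -/
def UniquelySelfAssembles (S : RTAS) (P : ℤ × ℤ → ℕ) (f : TileType → ℕ) : Prop :=
  ∀ α, S.Terminal α →
    (∀ p : ℤ × ℤ, (α p).isSome ↔ p ∈ PatternDom S.w S.h) ∧
    (∀ p t, α p = some t → f t = P p)

end RTAS
namespace RTAS

variable {S : RTAS}

lemma step_persist {α β : Assembly} (h : S.Step α β) {p : ℤ × ℤ} {t : TileType}
    (hp : α p = some t) : β p = some t := by
  obtain ⟨q, s, ⟨_, hq, _⟩, rfl⟩ := h
  rw [Function.update_apply]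
  split
  · next heq => subst heq; rw [hp] at hq; exact absurd hq (by simp)
  · exact hp

lemma reach_persist {α β : Assembly} (h : Relation.ReflTransGen S.Step α β)
    {p : ℤ × ℤ} {t : TileType} (hp : α p = some t) : β p = some t := by
  induction h with
  | refl => exact hp
  | tail _ hstep ih => exact step_persist hstep ih

lemma producible_dom {α : Assembly} (h : S.Producible α) :
    ∀ p t, α p = some t → p ∈ PatternDom S.w S.h := by
  induction h with
  | refl =>
    intro p t hp
    have := (S.seed_dom p).mp (by rw [hp]; rfl)
    have hh := S.hh
    have hw := S.hw
    rcases this with ⟨h1, h2, h3⟩ | ⟨h1, h2, h3⟩ <;>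
      exact ⟨by omega, by omega, by omega, by omega⟩
  | tail _ hstep ih =>
    intro p t hp
    obtain ⟨q, s, ⟨_, hqn, tw, ts, hw, hs, _, _⟩, rfl⟩ := hstep
    rw [Function.update_apply] at hp
    split at hp
    · next heq =>
      subst heq
      have h1 := ih _ _ hw
      have h2 := ih _ _ hs
      obtain ⟨a1, a2, a3, a4⟩ := h1
      obtain ⟨b1, b2, b3, b4⟩ := h2
      exact ⟨by omega, by omega, by omega, by omega⟩
    · exact ih _ _ hp

lemma producible_mem_T {α : Assembly} (h : S.Producible α) :
    ∀ p t, α p = some t → S.σ p = some t ∨ t ∈ S.T := by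
  induction h with
  | refl => intro p t hp; exact Or.inl hp
  | tail _ hstep ih =>
    intro p t hp
    obtain ⟨q, s, ⟨hsT, hqn, _⟩, rfl⟩ := hstep
    rw [Function.update_apply] at hp
    split at hp
    · exact Or.inr (by rw [← Option.some.injEq] at hp; simp at hp; subst hp; exact hsT)
    · exact ih _ _ hp

lemma attach_record {α : Assembly} (h : S.Producible α) {p : ℤ × ℤ} {t : TileType}
    (hσ : S.σ p = none) (hp : α p = some t) :
    ∃ α', S.Producible α' ∧ S.Attaches α' p t ∧
      Relation.ReflTransGen S.Step (Function.update α' p (some t)) α := by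
  induction h with
  | refl => rw [hσ] at hp; exact absurd hp (by simp)
  | tail hreach hstep ih =>
    obtain ⟨q, s, hat, rfl⟩ := hstep
    rw [Function.update_apply] at hp
    split at hp
    · next heq =>
      subst heq
      rw [Option.some.injEq] at hp
      subst hp
      exact ⟨_, hreach, hat, Relation.ReflTransGen.refl⟩
    · obtain ⟨α', h1, h2, h3⟩ := ih hp
      exact ⟨α', h1, h2, h3.tail ⟨q, s, hat, rfl⟩⟩

lemma neighbors {α : Assembly} (h : S.Producible α) {p : ℤ × ℤ} {t : TileType}
    (hσ : S.σ p = none) (hp : α p = some t) :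
    t ∈ S.T ∧ ∃ tw ts : TileType,
      α (p.1 - 1, p.2) = some tw ∧ α (p.1, p.2 - 1) = some ts ∧
      tw.east = t.west ∧ ts.north = t.south := by
  obtain ⟨α', hprod, ⟨hT, hn, tw, ts, hw, hs, he1, he2⟩, hreach⟩ := attach_record h hσ hp
  have hw' : Function.update α' p (some t) (p.1 - 1, p.2) = some tw := by
    rw [Function.update_apply]; split
    · next heq => exfalso; have := congrArg Prod.fst heq; simp at this
    · exact hw
  have hs' : Function.update α' p (some t) (p.1, p.2 - 1) = some ts := by
    rw [Function.update_apply]; split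
    · next heq => exfalso; have := congrArg Prod.snd heq; simp at this
    · exact hs
  exact ⟨hT, tw, ts, reach_persist hreach hw', reach_persist hreach hs', he1, he2⟩

lemma swap {α : Assembly} (h : S.Producible α) {p : ℤ × ℤ} {t t' : TileType}
    (hσ : S.σ p = none) (hp : α p = some t) (ht' : t' ∈ S.T)
    (hW : t'.west = t.west) (hS : t'.south = t.south) :
    ∃ β, S.Producible β ∧ β p = some t' := by
  obtain ⟨α', hprod, ⟨hT, hn, tw, ts, hw, hs, he1, he2⟩, _⟩ := attach_record h hσ hp
  refine ⟨Function.update α' p (some t'), hprod.tail ⟨p, t', ⟨ht', hn, tw, ts, hw, hs, ?_, ?_⟩, rfl⟩, ?_⟩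
  · rw [he1, hW]
  · rw [he2, hS]
  · simp

/-- Number of empty cells of `α` within the pattern rectangle. -/
noncomputable def emptyCount (S : RTAS) (α : Assembly) : ℕ :=
  ((Finset.Icc (0 : ℤ) (S.w : ℤ) ×ˢ Finset.Icc (0 : ℤ) (S.h : ℤ)).filter
    (fun p => α p = none)).card

lemma step_emptyCount {α β : Assembly} (hα : S.Producible α) (h : S.Step α β) :
    S.emptyCount β < S.emptyCount α := by
  obtain ⟨p, t, ⟨_, hpn, tw, ts, hw, hs, _, _⟩, rfl⟩ := h
  have hp : p ∈ PatternDom S.w S.h := by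
    have h1 := producible_dom hα _ _ hw
    have h2 := producible_dom hα _ _ hs
    obtain ⟨a1, a2, a3, a4⟩ := h1
    obtain ⟨b1, b2, b3, b4⟩ := h2
    exact ⟨by omega, by omega, by omega, by omega⟩
  obtain ⟨a1, a2, a3, a4⟩ := hp
  apply Finset.card_lt_card
  constructor
  · intro q hq
    simp only [Finset.mem_filter] at hq ⊢
    refine ⟨hq.1, ?_⟩
    have := hq.2
    rw [Function.update_apply] at this
    split at this
    · exact absurd this (by simp)
    · exact this
  · intro hsub
    have hpmem : p ∈ (Finset.Icc (0 : ℤ) (S.w : ℤ) ×ˢ Finset.Icc (0 : ℤ) (S.h : ℤ)).filter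
        (fun q => α q = none) := by
      simp only [Finset.mem_filter, Finset.mem_product, Finset.mem_Icc]
      exact ⟨⟨⟨a1, a2⟩, ⟨a3, a4⟩⟩, hpn⟩
    have := hsub hpmem
    simp only [Finset.mem_filter, Function.update_self] at this
    exact absurd this.2 (by simp)

lemma to_terminal (α : Assembly) (h : S.Producible α) :
    ∃ β, S.Terminal β ∧ Relation.ReflTransGen S.Step α β := by
  by_cases hterm : ∀ p t, ¬ S.Attaches α p t
  · exact ⟨α, ⟨h, hterm⟩, Relation.ReflTransGen.refl⟩
  · push_neg at hterm
    obtain ⟨p, t, hat⟩ := hterm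
    have hstep : S.Step α (Function.update α p (some t)) := ⟨p, t, hat, rfl⟩
    have hdec := step_emptyCount h hstep
    obtain ⟨γ, hγ, hreach⟩ := to_terminal (Function.update α p (some t)) (h.tail hstep)
    exact ⟨γ, hγ, Relation.ReflTransGen.head hstep hreach⟩
termination_by S.emptyCount α

end RTAS

/-- Glue allocation for signal tile types: if a directed RTAS uniquely
self-assembles `P` using exactly one tile type `t₁`, `t₀`, `t_e` of each of the
colors `c₁ ≠ c₀` and `c_e` respectively, and `P` contains a `c₁`-position and a
`c₀`-position whose south neighbors are both colored `c_e`, then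
`t₁(S) = t₀(S) = t_e(N)` and `t₁(W) ≠ t₀(W)`. If moreover some `c₁`-position
has a `c₀`-colored west neighbor then `t₀(E) = t₁(W)`, and if some
`c₀`-position has a `c₁`-colored west neighbor then `t₁(E) = t₀(W)`. -/
theorem signal_glue_allocation (S : RTAS) (hused : S.UsesAllTiles)
    (hdir : S.IsDirected) (P : ℤ × ℤ → ℕ) (f : TileType → ℕ)
    (hP : S.UniquelySelfAssembles P f)
    (c₁ c₀ ce : ℕ) (hc : c₁ ≠ c₀)
    (t₁ t₀ te : TileType)
    (ht₁ : t₁ ∈ S.T) (hf₁ : f t₁ = c₁) (hu₁ : ∀ t ∈ S.T, f t = c₁ → t = t₁)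
    (ht₀ : t₀ ∈ S.T) (hf₀ : f t₀ = c₀) (hu₀ : ∀ t ∈ S.T, f t = c₀ → t = t₀)
    (hte : te ∈ S.T) (hfe : f te = ce) (hue : ∀ t ∈ S.T, f t = ce → t = te)
    (x₁ y₁ x₂ y₂ : ℤ)
    (hx₁ : 1 ≤ x₁) (hx₁' : x₁ ≤ (S.w : ℤ)) (hy₁ : 2 ≤ y₁) (hy₁' : y₁ ≤ (S.h : ℤ))
    (hx₂ : 1 ≤ x₂) (hx₂' : x₂ ≤ (S.w : ℤ)) (hy₂ : 2 ≤ y₂) (hy₂' : y₂ ≤ (S.h : ℤ))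
    (hP₁ : P (x₁, y₁) = c₁) (hP₂ : P (x₂, y₂) = c₀)
    (hP₃ : P (x₁, y₁ - 1) = ce) (hP₄ : P (x₂, y₂ - 1) = ce) :
    (t₁.south = t₀.south ∧ t₀.south = te.north ∧ t₁.west ≠ t₀.west) ∧
    ((∃ x₃ y₃ : ℤ, 2 ≤ x₃ ∧ x₃ ≤ (S.w : ℤ) ∧ 1 ≤ y₃ ∧ y₃ ≤ (S.h : ℤ) ∧
        P (x₃, y₃) = c₁ ∧ P (x₃ - 1, y₃) = c₀) → t₀.east = t₁.west) ∧
    ((∃ x₄ y₄ : ℤ, 2 ≤ x₄ ∧ x₄ ≤ (S.w : ℤ) ∧ 1 ≤ y₄ ∧ y₄ ≤ (S.h : ℤ) ∧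
        P (x₄, y₄) = c₀ ∧ P (x₄ - 1, y₄) = c₁) → t₁.east = t₀.west) := by
  obtain ⟨α, hterm, -⟩ := RTAS.to_terminal S.σ Relation.ReflTransGen.refl
  obtain ⟨hdom, hcol⟩ := hP α hterm
  have hσnone : ∀ x y : ℤ, 1 ≤ x → 1 ≤ y → S.σ (x, y) = none := by
    intro x y hx hy
    by_contra hne
    rw [← Ne, Option.ne_none_iff_isSome] at hne
    rcases (S.seed_dom (x, y)).mp hne with ⟨_, _, h3⟩ | ⟨h1, _, _⟩ <;> simp_all <;> omega
  have htile : ∀ x y : ℤ, 1 ≤ x → x ≤ (S.w : ℤ) → 1 ≤ y → y ≤ (S.h : ℤ) →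
      ∃ t, α (x, y) = some t ∧ t ∈ S.T ∧ f t = P (x, y) := by
    intro x y h1 h2 h3 h4
    have hmem : ((x, y) : ℤ × ℤ) ∈ RTAS.PatternDom S.w S.h :=
      ⟨by omega, by simpa using h2, by omega, by simpa using h4⟩
    obtain ⟨t, ht⟩ := Option.isSome_iff_exists.mp ((hdom (x, y)).mpr hmem)
    rcases RTAS.producible_mem_T hterm.1 _ _ ht with hl | hr
    · rw [hσnone x y h1 h3] at hl; exact absurd hl (by simp)
    · exact ⟨t, ht, hr, hcol _ _ ht⟩
  -- tile at a c₁-position with all coords ≥ 1 is t₁, etc.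
  have get₁ : ∀ x y : ℤ, 1 ≤ x → x ≤ (S.w : ℤ) → 1 ≤ y → y ≤ (S.h : ℤ) →
      P (x, y) = c₁ → α (x, y) = some t₁ := by
    intro x y h1 h2 h3 h4 hPc
    obtain ⟨t, ht, hT, hft⟩ := htile x y h1 h2 h3 h4
    rw [hu₁ t hT (by rw [hft, hPc])] at ht; exact ht
  have get₀ : ∀ x y : ℤ, 1 ≤ x → x ≤ (S.w : ℤ) → 1 ≤ y → y ≤ (S.h : ℤ) →
      P (x, y) = c₀ → α (x, y) = some t₀ := by
    intro x y h1 h2 h3 h4 hPc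
    obtain ⟨t, ht, hT, hft⟩ := htile x y h1 h2 h3 h4
    rw [hu₀ t hT (by rw [hft, hPc])] at ht; exact ht
  have gete : ∀ x y : ℤ, 1 ≤ x → x ≤ (S.w : ℤ) → 1 ≤ y → y ≤ (S.h : ℤ) →
      P (x, y) = ce → α (x, y) = some te := by
    intro x y h1 h2 h3 h4 hPc
    obtain ⟨t, ht, hT, hft⟩ := htile x y h1 h2 h3 h4
    rw [hue t hT (by rw [hft, hPc])] at ht; exact ht
  -- south glue of t₁
  have hS₁ : te.north = t₁.south := by
    have hα₁ : α (x₁, y₁) = some t₁ := get₁ x₁ y₁ (by omega) hx₁' (by omega) hy₁' hP₁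
    obtain ⟨-, tw, ts, -, hs, -, he⟩ :=
      RTAS.neighbors hterm.1 (hσnone x₁ y₁ (by omega) (by omega)) hα₁
    have hαe : α (x₁, y₁ - 1) = some te :=
      gete x₁ (y₁ - 1) (by omega) hx₁' (by omega) (by omega) hP₃
    simp only at hs
    rw [hαe, Option.some.injEq] at hs
    rw [← hs] at he; exact he
  have hS₀ : te.north = t₀.south := by
    have hα₀ : α (x₂, y₂) = some t₀ := get₀ x₂ y₂ (by omega) hx₂' (by omega) hy₂' hP₂
    obtain ⟨-, tw, ts, -, hs, -, he⟩ :=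
      RTAS.neighbors hterm.1 (hσnone x₂ y₂ (by omega) (by omega)) hα₀
    have hαe : α (x₂, y₂ - 1) = some te :=
      gete x₂ (y₂ - 1) (by omega) hx₂' (by omega) (by omega) hP₄
    simp only at hs
    rw [hαe, Option.some.injEq] at hs
    rw [← hs] at he; exact he
  refine ⟨⟨by rw [← hS₁, hS₀], hS₀.symm, ?_⟩, ?_, ?_⟩
  · -- t₁.west ≠ t₀.west
    intro hWeq
    have hα₁ : α (x₁, y₁) = some t₁ := get₁ x₁ y₁ (by omega) hx₁' (by omega) hy₁' hP₁
    obtain ⟨β, hβprod, hβ⟩ := RTAS.swap hterm.1 (hσnone x₁ y₁ (by omega) (by omega)) hα₁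
      ht₀ hWeq.symm (by rw [← hS₀, hS₁])
    obtain ⟨γ, hγterm, hreach⟩ := RTAS.to_terminal β hβprod
    have hγ : γ (x₁, y₁) = some t₀ := RTAS.reach_persist hreach hβ
    have := (hP γ hγterm).2 _ _ hγ
    rw [hf₀, hP₁] at this
    exact hc this.symm
  · rintro ⟨x₃, y₃, h1, h2, h3, h4, h5, h6⟩
    have hα₁ : α (x₃, y₃) = some t₁ := get₁ x₃ y₃ (by omega) h2 h3 h4 h5
    obtain ⟨-, tw, ts, hw, -, he, -⟩ :=
      RTAS.neighbors hterm.1 (hσnone x₃ y₃ (by omega) (by omega)) hα₁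
    have hα₀ : α (x₃ - 1, y₃) = some t₀ := get₀ (x₃ - 1) y₃ (by omega) (by omega) h3 h4 h6
    simp only at hw
    rw [hα₀, Option.some.injEq] at hw
    rw [← hw] at he; exact he
  · rintro ⟨x₄, y₄, h1, h2, h3, h4, h5, h6⟩
    have hα₀ : α (x₄, y₄) = some t₀ := get₀ x₄ y₄ (by omega) h2 h3 h4 h5
    obtain ⟨-, tw, ts, hw, -, he, -⟩ :=
      RTAS.neighbors hterm.1 (hσnone x₄ y₄ (by omega) (by omega)) hα₀
    have hα₁ : α (x₄ - 1, y₄) = some t₁ := get₁ (x₄ - 1) y₄ (by omega) (by omega) h3 h4 h6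
    simp only at hw
    rw [hα₁, Option.some.injEq] at hw
    rw [← hw] at he; exact he
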